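/- If X* ~ Sk(λ, λ) (i.e., λ₁ = λ₂ = λ = δ/2 > 0, so the distribution is symmetric with mean 0), then E[X* · 1_{X* ≥ 1}] = (δ/2) e^{-δ} (I₀(δ) + I₁(δ)), where δ = 2λ and I_n is the modified Bessel function of the first kind. -/
import Mathlib


open Real Filter

/-- PMF of the Poisson distribution with mean `l`. -/
noncomputable def poissonPMF (l : ℝ) (n : ℕ) : ℝ :=
  Real.exp (-l) * l ^ n / n.factorial

/-- PMF of the Skellam distribution `Sk(l1, l2)`, i.e. the distribution of the
difference `X₁ - X₂` of independent Poisson variables with means `l1`, `l2`,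
obtained by the convolution formula. -/
noncomputable def skellamPMF (l1 l2 : ℝ) (x : ℤ) : ℝ :=
  ∑' k : ℕ, (if 0 ≤ x + (k : ℤ) then poissonPMF l1 (x + (k : ℤ)).toNat else 0) * poissonPMF l2 k

/-- Modified Bessel function of the first kind of integer order `n`,
`I_n(z) = (z/2)^|n| ∑_{k} (z/2)^{2k}/(k! (k+|n|)!)`, with `I_{-n} = I_n`. -/
noncomputable def besselI (n : ℤ) (z : ℝ) : ℝ :=
  (z / 2) ^ n.natAbs *
    ∑' k : ℕ, (z / 2) ^ (2 * k) / ((k.factorial : ℝ) * (k + n.natAbs).factorial)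

/-- Upper tail probability `P(X* ≥ a)` of the Skellam distribution. -/
noncomputable def skellamTail (l1 l2 : ℝ) (a : ℤ) : ℝ :=
  ∑' x : ℤ, if a ≤ x then skellamPMF l1 l2 x else 0

lemma pois_nonneg {l : ℝ} (hl : 0 ≤ l) (n : ℕ) : 0 ≤ poissonPMF l n := by
  unfold poissonPMF
  have h1 := Real.exp_pos (-l)
  have h2 : (0:ℝ) < n.factorial := by exact_mod_cast n.factorial_pos
  positivity

lemma pois_summable (l : ℝ) : Summable (poissonPMF l) := by
  have h := (Real.summable_pow_div_factorial l).mul_left (Real.exp (-l))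
  exact h.congr fun n => by unfold poissonPMF; rw [mul_div_assoc]

lemma pois_summable_add (l : ℝ) (k : ℕ) : Summable (fun n => poissonPMF l (n + k)) :=
  (summable_nat_add_iff k).2 (pois_summable l)

lemma pois_rec (l : ℝ) (n : ℕ) : ((n:ℝ)+1) * poissonPMF l (n+1) = l * poissonPMF l n := by
  have h0 : ((n.factorial : ℝ)) ≠ 0 := Nat.cast_ne_zero.2 n.factorial_ne_zero
  have h1 : ((n:ℝ)+1) ≠ 0 := by positivity
  unfold poissonPMF
  rw [Nat.factorial_succ]
  push_cast
  field_simp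
  ring

lemma pois_add_le {l : ℝ} (hl : 0 ≤ l) (m k : ℕ) :
    poissonPMF l (m + k) ≤ poissonPMF l m * (l ^ k / k.factorial) := by
  have key : poissonPMF l m * (l ^ k / k.factorial)
      = Real.exp (-l) * l ^ (m + k) / ((m.factorial : ℝ) * k.factorial) := by
    unfold poissonPMF; rw [pow_add]; ring
  rw [key]
  unfold poissonPMF
  have hfac : ((m.factorial * k.factorial : ℕ) : ℝ) ≤ ((m+k).factorial : ℝ) := by
    exact_mod_cast Nat.le_of_dvd (m+k).factorial_pos
      (Nat.factorial_mul_factorial_dvd_factorial_add m k)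
  have hpos : (0:ℝ) < (m.factorial : ℝ) * k.factorial := by
    have := m.factorial_pos; have := k.factorial_pos; positivity
  have hnum : (0:ℝ) ≤ Real.exp (-l) * l ^ (m + k) := by positivity
  push_cast at hfac
  exact div_le_div_of_nonneg_left hnum hpos hfac

/-- Tail-shifted Poisson sum `∑_{n} P(n+k)`. -/
noncomputable def ptail (l : ℝ) (k : ℕ) : ℝ := ∑' n : ℕ, poissonPMF l (n + k)

lemma ptail_succ (l : ℝ) (k : ℕ) : ptail l k = poissonPMF l k + ptail l (k+1) := by
  unfold ptail
  rw [Summable.tsum_eq_zero_add (pois_summable_add l k)]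
  congr 1
  · simp
  · exact tsum_congr fun n => by congr 1; omega

lemma ptail_nonneg {l : ℝ} (hl : 0 ≤ l) (k : ℕ) : 0 ≤ ptail l k :=
  tsum_nonneg fun n => pois_nonneg hl _

lemma ptail_le_zero {l : ℝ} (hl : 0 ≤ l) (k : ℕ) : ptail l k ≤ ptail l 0 := by
  induction k with
  | zero => exact le_refl _
  | succ n ih =>
    have := ptail_succ l n
    have := pois_nonneg hl n
    linarith

lemma pois_le_ptail {l : ℝ} (hl : 0 ≤ l) (k : ℕ) : poissonPMF l k ≤ ptail l 0 := by
  have h := ptail_succ l k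
  have h2 := ptail_nonneg hl (k+1)
  have h3 := ptail_le_zero hl k
  linarith

lemma sum_kP (l : ℝ) : Summable (fun k : ℕ => (k:ℝ) * poissonPMF l k) := by
  apply (summable_nat_add_iff 1).1
  apply ((pois_summable l).mul_left l).congr
  intro n
  rw [← pois_rec l n]
  push_cast
  ring

lemma sumQ {l : ℝ} (hl : 0 ≤ l) :
    Summable (fun k : ℕ => l ^ k / k.factorial * poissonPMF l k) := by
  apply Summable.of_nonneg_of_le (f := fun k : ℕ => Real.exp (-l) * ((l^2) ^ k / k.factorial))
  · intro k
    have := pois_nonneg hl k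
    have h2 : (0:ℝ) < k.factorial := by exact_mod_cast k.factorial_pos
    positivity
  · intro k
    have h2 : (0:ℝ) < k.factorial := by exact_mod_cast k.factorial_pos
    have key : l ^ k / k.factorial * poissonPMF l k
        = Real.exp (-l) * (l^2) ^ k / ((k.factorial : ℝ) * k.factorial) := by
      unfold poissonPMF; rw [← pow_mul, two_mul, pow_add]; ring
    rw [key]
    rw [mul_div_assoc]
    apply mul_le_mul_of_nonneg_left _ (Real.exp_pos (-l)).le
    apply div_le_div_of_nonneg_left (by positivity) h2
    have h1 : (1:ℝ) ≤ k.factorial := by exact_mod_cast k.factorial_pos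
    nlinarith
  · exact (Real.summable_pow_div_factorial (l^2)).mul_left _

lemma pois_mul_le {l : ℝ} (hl : 0 ≤ l) (m k : ℕ) :
    poissonPMF l (m + k) * poissonPMF l k
      ≤ poissonPMF l m * (l ^ k / k.factorial * poissonPMF l k) := by
  have h := pois_add_le hl m k
  have h2 := pois_nonneg hl k
  calc poissonPMF l (m+k) * poissonPMF l k
      ≤ (poissonPMF l m * (l ^ k / k.factorial)) * poissonPMF l k :=
        mul_le_mul_of_nonneg_right h h2
    _ = poissonPMF l m * (l ^ k / k.factorial * poissonPMF l k) := by ring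

lemma sum_row {l : ℝ} (hl : 0 ≤ l) (m : ℕ) :
    Summable (fun k : ℕ => poissonPMF l (m + k) * poissonPMF l k) := by
  apply Summable.of_nonneg_of_le
    (f := fun k : ℕ => poissonPMF l m * (l ^ k / k.factorial * poissonPMF l k))
  · intro k; exact mul_nonneg (pois_nonneg hl _) (pois_nonneg hl _)
  · intro k; exact pois_mul_le hl m k
  · exact (sumQ hl).mul_left _

lemma tsum_row_le {l : ℝ} (hl : 0 ≤ l) (m : ℕ) :
    ∑' k : ℕ, poissonPMF l (m + k) * poissonPMF l k
      ≤ poissonPMF l m * ∑' k : ℕ, (l ^ k / k.factorial * poissonPMF l k) := by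
  rw [← tsum_mul_left]
  exact Summable.tsum_le_tsum (fun k => pois_mul_le hl m k) (sum_row hl m) ((sumQ hl).mul_left _)

lemma sum_P_ptail {l : ℝ} (hl : 0 ≤ l) (c : ℕ) :
    Summable (fun k : ℕ => poissonPMF l k * ptail l (k + c)) := by
  apply Summable.of_nonneg_of_le (f := fun k : ℕ => poissonPMF l k * ptail l 0)
  · intro k; exact mul_nonneg (pois_nonneg hl _) (ptail_nonneg hl _)
  · intro k; exact mul_le_mul_of_nonneg_left (ptail_le_zero hl _) (pois_nonneg hl _)
  · exact (pois_summable l).mul_right _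

lemma sum_kP_ptail {l : ℝ} (hl : 0 ≤ l) :
    Summable (fun k : ℕ => (k:ℝ) * (poissonPMF l k * ptail l (k + 1))) := by
  apply Summable.of_nonneg_of_le (f := fun k : ℕ => (k:ℝ) * poissonPMF l k * ptail l 0)
  · intro k
    exact mul_nonneg (Nat.cast_nonneg k)
      (mul_nonneg (pois_nonneg hl _) (ptail_nonneg hl _))
  · intro k
    have h1 : poissonPMF l k * ptail l (k + 1) ≤ poissonPMF l k * ptail l 0 :=
      mul_le_mul_of_nonneg_left (ptail_le_zero hl _) (pois_nonneg hl _)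
    calc (k:ℝ) * (poissonPMF l k * ptail l (k + 1))
        ≤ (k:ℝ) * (poissonPMF l k * ptail l 0) :=
          mul_le_mul_of_nonneg_left h1 (Nat.cast_nonneg k)
      _ = (k:ℝ) * poissonPMF l k * ptail l 0 := by ring
  · exact (sum_kP l).mul_right _

lemma sum_PP {l : ℝ} (hl : 0 ≤ l) :
    Summable (fun k : ℕ => poissonPMF l k * poissonPMF l k) := by
  apply Summable.of_nonneg_of_le (f := fun k : ℕ => ptail l 0 * poissonPMF l k)
  · intro k; exact mul_nonneg (pois_nonneg hl _) (pois_nonneg hl _)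
  · intro k; exact mul_le_mul_of_nonneg_right (pois_le_ptail hl k) (pois_nonneg hl _)
  · exact (pois_summable l).mul_left _

lemma sum_PP1 {l : ℝ} (hl : 0 ≤ l) :
    Summable (fun k : ℕ => poissonPMF l k * poissonPMF l (k+1)) := by
  apply Summable.of_nonneg_of_le (f := fun k : ℕ => poissonPMF l k * ptail l 0)
  · intro k; exact mul_nonneg (pois_nonneg hl _) (pois_nonneg hl _)
  · intro k; exact mul_le_mul_of_nonneg_left (pois_le_ptail hl _) (pois_nonneg hl _)
  · exact (pois_summable l).mul_right _

set_option maxHeartbeats 1000000 in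
lemma sumF {l : ℝ} (hl : 0 ≤ l) :
    Summable (Function.uncurry
      (fun n k : ℕ => ((n:ℝ)+1) * (poissonPMF l (n+1+k) * poissonPMF l k))) := by
  have hnn : (0:(ℕ × ℕ) → ℝ) ≤ Function.uncurry
      (fun n k : ℕ => ((n:ℝ)+1) * (poissonPMF l (n+1+k) * poissonPMF l k)) := by
    intro p
    have h1 : (0:ℝ) ≤ (p.1:ℝ)+1 := by positivity
    exact mul_nonneg h1 (mul_nonneg (pois_nonneg hl _) (pois_nonneg hl _))
  refine (summable_prod_of_nonneg hnn).2 ⟨fun n => ?_, ?_⟩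
  · show Summable fun k : ℕ => ((n:ℝ)+1) * (poissonPMF l (n+1+k) * poissonPMF l k)
    exact (sum_row hl (n+1)).mul_left _
  · show Summable fun n : ℕ =>
      ∑' k : ℕ, ((n:ℝ)+1) * (poissonPMF l (n+1+k) * poissonPMF l k)
    have hcol : ∀ n : ℕ, (∑' k : ℕ, ((n:ℝ)+1) * (poissonPMF l (n+1+k) * poissonPMF l k))
        ≤ l * poissonPMF l n * (∑' k : ℕ, (l ^ k / k.factorial * poissonPMF l k)) := by
      intro n
      have h1 : (0:ℝ) ≤ (n:ℝ)+1 := by positivity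
      calc (∑' k : ℕ, ((n:ℝ)+1) * (poissonPMF l (n+1+k) * poissonPMF l k))
          = ((n:ℝ)+1) * ∑' k : ℕ, poissonPMF l (n+1+k) * poissonPMF l k :=
            tsum_mul_left
        _ ≤ ((n:ℝ)+1) * (poissonPMF l (n+1)
              * ∑' k : ℕ, (l ^ k / k.factorial * poissonPMF l k)) :=
            mul_le_mul_of_nonneg_left (tsum_row_le hl (n+1)) h1
        _ = (((n:ℝ)+1) * poissonPMF l (n+1))
              * ∑' k : ℕ, (l ^ k / k.factorial * poissonPMF l k) := by ring
        _ = l * poissonPMF l n * ∑' k : ℕ, (l ^ k / k.factorial * poissonPMF l k) := by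
            rw [pois_rec]
    apply Summable.of_nonneg_of_le
      (f := fun n : ℕ => l * poissonPMF l n
        * (∑' k : ℕ, (l ^ k / k.factorial * poissonPMF l k)))
    · intro n
      apply tsum_nonneg
      intro k
      have h1 : (0:ℝ) ≤ (n:ℝ)+1 := by positivity
      exact mul_nonneg h1 (mul_nonneg (pois_nonneg hl _) (pois_nonneg hl _))
    · intro n
      exact hcol n
    · exact ((pois_summable l).mul_left l).mul_right _

lemma skellam_nat (l : ℝ) (n : ℕ) :
    skellamPMF l l (n : ℤ) = ∑' k : ℕ, poissonPMF l (n + k) * poissonPMF l k := by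
  unfold skellamPMF
  apply tsum_congr; intro k
  have h : (0:ℤ) ≤ (n:ℤ) + k := by positivity
  rw [if_pos h]
  have h2 : ((n:ℤ) + (k:ℤ)).toNat = n + k := by omega
  rw [h2]

lemma skellam_inner_sum (l : ℝ) (k : ℕ) :
    ∑' n : ℕ, ((n:ℝ)+1) * (poissonPMF l (n+1+k) * poissonPMF l k)
      = poissonPMF l k * (l * ptail l k - (k:ℝ) * ptail l (k+1)) := by
  have key : ∀ n : ℕ, ((n:ℝ)+1) * (poissonPMF l (n+1+k) * poissonPMF l k)
      = poissonPMF l k * (l * poissonPMF l (n+k) - (k:ℝ) * poissonPMF l (n+(k+1))) := by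
    intro n
    have h := pois_rec l (n+k)
    have e1 : n + k + 1 = n + 1 + k := by omega
    have e2 : n + (k+1) = n + 1 + k := by omega
    rw [e1] at h
    rw [e2]
    push_cast at h
    linear_combination poissonPMF l k * h
  rw [tsum_congr key, tsum_mul_left]
  congr 1
  rw [Summable.tsum_sub ((pois_summable_add l k).mul_left l)
    ((pois_summable_add l (k+1)).mul_left ((k:ℝ))), tsum_mul_left, tsum_mul_left]
  rfl

lemma exp_bessel0 (δ : ℝ) :
    Real.exp (-δ) * besselI 0 δ = ∑' k : ℕ, poissonPMF (δ/2) k * poissonPMF (δ/2) k := by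
  unfold besselI
  simp only [Int.natAbs_zero, pow_zero, one_mul, add_zero]
  rw [← tsum_mul_left]
  apply tsum_congr; intro k
  unfold poissonPMF
  rw [show Real.exp (-δ) = Real.exp (-(δ/2)) * Real.exp (-(δ/2)) by
    rw [← Real.exp_add]; congr 1; ring]
  generalize Real.exp (-(δ/2)) = E
  have h2 : ((k.factorial:ℝ)) ≠ 0 := Nat.cast_ne_zero.2 k.factorial_ne_zero
  field_simp
  ring

lemma exp_bessel1 (δ : ℝ) :
    Real.exp (-δ) * besselI 1 δ = ∑' k : ℕ, poissonPMF (δ/2) k * poissonPMF (δ/2) (k+1) := by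
  unfold besselI
  simp only [Int.natAbs_one, pow_one]
  rw [← mul_assoc, ← tsum_mul_left]
  apply tsum_congr; intro k
  unfold poissonPMF
  rw [show Real.exp (-δ) = Real.exp (-(δ/2)) * Real.exp (-(δ/2)) by
    rw [← Real.exp_add]; congr 1; ring]
  generalize Real.exp (-(δ/2)) = E
  have h2 : ((k.factorial:ℝ)) ≠ 0 := Nat.cast_ne_zero.2 k.factorial_ne_zero
  have h3 : (((k+1).factorial:ℝ)) ≠ 0 := Nat.cast_ne_zero.2 (k+1).factorial_ne_zero
  field_simp
  ring

theorem skellam_symm_partial_mean (δ : ℝ) (hδ : 0 < δ) :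
    ∑' x : ℤ, (if 1 ≤ x then (x : ℝ) else 0) * skellamPMF (δ / 2) (δ / 2) x =
      (δ / 2) * Real.exp (-δ) * (besselI 0 δ + besselI 1 δ) := by
  have hl : (0:ℝ) ≤ δ / 2 := by linarith
  set l : ℝ := δ / 2 with hldef
  -- Step 1: reindex the sum over ℤ to a sum over ℕ, and unfold the Skellam PMF
  have hinj : Function.Injective (fun n : ℕ => (n:ℤ) + 1) := by
    intro a b h
    simp only at h
    omega
  have hsupp : Function.support
      (fun x : ℤ => (if 1 ≤ x then (x:ℝ) else 0) * skellamPMF l l x)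
        ⊆ Set.range (fun n : ℕ => (n:ℤ) + 1) := by
    intro x hx
    rcases le_or_gt 1 x with h | h
    · exact ⟨(x-1).toNat, by show ((x-1).toNat : ℤ) + 1 = x; omega⟩
    · exfalso
      apply hx
      show (if 1 ≤ x then (x:ℝ) else 0) * skellamPMF l l x = 0
      rw [if_neg (by omega), zero_mul]
  have hskell : ∀ n : ℕ, skellamPMF l l ((n:ℤ)+1)
      = ∑' k : ℕ, poissonPMF l (n+1+k) * poissonPMF l k := by
    intro n
    have h : ((n:ℤ)+1) = ((n+1 : ℕ) : ℤ) := by push_cast; ring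
    rw [h, skellam_nat]
  have key : (∑' x : ℤ, (if 1 ≤ x then (x:ℝ) else 0) * skellamPMF l l x)
      = ∑' n : ℕ, ∑' k : ℕ, ((n:ℝ)+1) * (poissonPMF l (n+1+k) * poissonPMF l k) := by
    rw [← hinj.tsum_eq hsupp]
    apply tsum_congr
    intro n
    show (if 1 ≤ (n:ℤ)+1 then (((n:ℤ)+1 : ℤ) : ℝ) else 0) * skellamPMF l l ((n:ℤ)+1) = _
    rw [if_pos (by omega : (1:ℤ) ≤ (n:ℤ)+1), hskell n, tsum_mul_left]
    congr 1
    push_cast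
    ring
  rw [key]
  -- Step 2: swap the order of summation
  rw [← Summable.tsum_comm (sumF hl)]
  -- Step 3: compute the inner sums
  have step4 : (∑' k : ℕ, ∑' n : ℕ, ((n:ℝ)+1) * (poissonPMF l (n+1+k) * poissonPMF l k))
      = ∑' k : ℕ, (l * (poissonPMF l k * ptail l k)
          - (k:ℝ) * (poissonPMF l k * ptail l (k+1))) := by
    apply tsum_congr; intro k
    rw [skellam_inner_sum]
    ring
  rw [step4]
  -- Step 4: split and telescope
  have sumA : Summable (fun k : ℕ => poissonPMF l k * ptail l k) :=
    (sum_P_ptail hl 0).congr fun k => by rw [Nat.add_zero]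
  have sumB : Summable (fun k : ℕ => (k:ℝ) * (poissonPMF l k * ptail l (k+1))) :=
    sum_kP_ptail hl
  have sumC : Summable (fun k : ℕ => poissonPMF l k * ptail l (k+2)) :=
    sum_P_ptail hl 2
  rw [Summable.tsum_sub (sumA.mul_left l) sumB, tsum_mul_left]
  have hB : (∑' k : ℕ, (k:ℝ) * (poissonPMF l k * ptail l (k+1)))
      = l * ∑' k : ℕ, poissonPMF l k * ptail l (k+2) := by
    rw [Summable.tsum_eq_zero_add sumB]
    simp only [Nat.cast_zero, zero_mul, zero_add]
    rw [← tsum_mul_left]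
    apply tsum_congr; intro k
    have h := pois_rec l k
    push_cast
    linear_combination ptail l (k+1+1) * h
  rw [hB, ← mul_sub, ← Summable.tsum_sub sumA sumC]
  have step6 : (∑' k : ℕ, (poissonPMF l k * ptail l k - poissonPMF l k * ptail l (k+2)))
      = (∑' k : ℕ, poissonPMF l k * poissonPMF l k)
        + ∑' k : ℕ, poissonPMF l k * poissonPMF l (k+1) := by
    rw [← Summable.tsum_add (sum_PP hl) (sum_PP1 hl)]
    apply tsum_congr; intro k
    rw [ptail_succ l k, ptail_succ l (k+1)]
    ring
  rw [step6]
  -- Step 5: identify the right-hand side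
  have hrhs : l * Real.exp (-δ) * (besselI 0 δ + besselI 1 δ)
      = l * ((∑' k : ℕ, poissonPMF l k * poissonPMF l k)
          + ∑' k : ℕ, poissonPMF l k * poissonPMF l (k+1)) := by
    rw [mul_assoc, mul_add, exp_bessel0 δ, exp_bessel1 δ, ← hldef]
  rw [hrhs]
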